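/- Let Mut ⊆ Mut' be two sets of mutants such that ¬Fail(x) for every x ∈ Mut, let α° be a first failure of Mut' \ Mut and α* a last success of Mut' \ Mut. Then: (i) α° is a first failure of Mut'; and (ii) if dist(α*, t) = dist(α°, t), then α* is a last success of Mut'. (Corollary of Theorem 3: when no original mutant fails, the first failure and, in the equal-distance case, the last success found among the newly added mutants serve as the first failure and last success of the whole expanded set, so the testing process can proceed incrementally.) -/

import Mathlib

/-- A point `a` is a first failure of the set `S` (w.r.t. seed `t`) if `a ∈ S`, the model
fails on `a`, and it does not fail on any point of `S` strictly closer to `t`. -/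
def FirstFailure {D : Type*} [MetricSpace D] (t : D) (Fail : D → Prop)
    (S : Set D) (a : D) : Prop :=
  a ∈ S ∧ Fail a ∧ ∀ x ∈ S, dist x t < dist a t → ¬ Fail x

/-- A point `b` is a last success of the set `S` (w.r.t. seed `t`) if `b ∈ S`, the model
does not fail on `b` nor on any point of `S` strictly closer to `t`, and `b` is maximal
in distance to `t` among the points of `S` with these properties. -/
def LastSuccess {D : Type*} [MetricSpace D] (t : D) (Fail : D → Prop)
    (S : Set D) (b : D) : Prop :=
  b ∈ S ∧ ¬ Fail b ∧ (∀ x ∈ S, dist x t < dist b t → ¬ Fail x) ∧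
    ∀ τ ∈ S, (¬ Fail τ ∧ ∀ x ∈ S, dist x t < dist τ t → ¬ Fail x) → dist τ t ≤ dist b t

section

variable {D : Type*} [MetricSpace D] {t : D} {Fail : D → Prop} {S T : Set D}

theorem not_fail_of_not_fail_diff {r : ℝ} (hT : ∀ x ∈ T, ¬ Fail x)
    (h : ∀ x ∈ S \ T, dist x t < r → ¬ Fail x) : ∀ x ∈ S, dist x t < r → ¬ Fail x := by
  intro x hx hlt
  by_cases hxT : x ∈ T
  · exact hT x hxT
  · exact h x ⟨hx, hxT⟩ hlt

theorem dist_le_of_fail {τ a : D} (hτ : ∀ x ∈ S, dist x t < dist τ t → ¬ Fail x)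
    (haS : a ∈ S) (ha : Fail a) : dist τ t ≤ dist a t :=
  not_lt.1 fun hlt => hτ a haS hlt ha

theorem FirstFailure.of_diff {a : D} (h : FirstFailure t Fail (S \ T) a)
    (hT : ∀ x ∈ T, ¬ Fail x) : FirstFailure t Fail S a :=
  ⟨h.1.1, h.2.1, not_fail_of_not_fail_diff hT h.2.2⟩

/-- Any failure of `S` bounds the distance of every success of `S`, so a success at the
distance of a failure is automatically maximal. -/
theorem LastSuccess.of_diff_of_dist_eq {a b : D} (h : LastSuccess t Fail (S \ T) b)
    (hT : ∀ x ∈ T, ¬ Fail x) (haS : a ∈ S) (ha : Fail a) (hab : dist b t = dist a t) :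
    LastSuccess t Fail S b :=
  ⟨h.1.1, h.2.1, not_fail_of_not_fail_diff hT h.2.2.1,
    fun _ _ hτ => hab ▸ dist_le_of_fail hτ.2 haS ha⟩

end

theorem incremental_corollary_general {D : Type*} [MetricSpace D] (t : D) (Fail : D → Prop)
    (Mut Mut' : Set D) (hnf : ∀ x ∈ Mut, ¬ Fail x)
    (αo : D) (hαo : FirstFailure t Fail (Mut' \ Mut) αo)
    (αs : D) (hαs : LastSuccess t Fail (Mut' \ Mut) αs) :
    FirstFailure t Fail Mut' αo ∧
      (dist αs t = dist αo t → LastSuccess t Fail Mut' αs) :=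
  ⟨hαo.of_diff hnf, hαs.of_diff_of_dist_eq hnf hαo.1.1 hαo.2.1⟩

/-- Corollary of Theorem 3: when no original mutant fails, the first failure found among
the newly added mutants is a first failure of the whole expanded set, and in the
equal-distance case the last success found among the newly added mutants is a last
success of the whole expanded set. -/
theorem incremental_corollary {D : Type*} [MetricSpace D] (t : D) (Fail : D → Prop)
    (Mut Mut' : Set D) (hsub : Mut ⊆ Mut') (hnf : ∀ x ∈ Mut, ¬ Fail x)
    (αo : D) (hαo : FirstFailure t Fail (Mut' \ Mut) αo)
    (αs : D) (hαs : LastSuccess t Fail (Mut' \ Mut) αs) :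
    FirstFailure t Fail Mut' αo ∧
      (dist αs t = dist αo t → LastSuccess t Fail Mut' αs) :=
  incremental_corollary_general t Fail Mut Mut' hnf αo hαo αs hαs
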